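/- arXiv:1908.03183 — 3 statements merged into one kernel-verified Lean document; each statement's English description precedes it below -/
import Mathlib

section
/- Let x : [0,T] → ℝ be Hölder continuous of order α ∈ (0,1] with Hölder constant L, i.e. |x_t - x_s| ≤ L|t-s|^α. Let θ ∈ (0,1) with θ/α arbitrary, and let y ∈ ℝ. Then for every t ∈ [0,T], ∫₀ᵗ 1_{x_s < y < x_t}/(t-s)^{1+θ} ds ≤ θ^{-1} L^{θ/α} |x_t - y|^{-θ/α}. -/
/-! If `x_s < y < x_t`, Hölder continuity gives `x_t - y ≤ x_t - x_s ≤ L (t - s)^α`, so the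
crossing can only happen at distance `t - s ≥ δ := ((x_t - y) / L)^{1/α}`. The integrand is
therefore dominated by `(t - s)^{-(1+θ)}` on `s ≤ t - δ`, whose integral is `θ⁻¹ δ^{-θ}`. -/

open MeasureTheory Set
open scoped ENNReal

theorem setLIntegral_Iic_comp_const_sub (f : ℝ → ℝ≥0∞) (t c : ℝ) :
    ∫⁻ s in Iic (t - c), f (t - s) = ∫⁻ u in Ici c, f u := by
  rw [← preimage_const_sub_Ici]
  exact (volume.measurePreserving_sub_left t).setLIntegral_comp_preimage_emb
    (measurableEmbedding_subLeft t) f (Ici c)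

theorem setLIntegral_Ici_rpow_neg_one_sub {θ δ : ℝ} (hθ : 0 < θ) (hδ : 0 < δ) :
    ∫⁻ u in Ici δ, ENNReal.ofReal (u ^ (-(1 + θ))) = ENNReal.ofReal (θ⁻¹ * δ ^ (-θ)) := by
  have hexp : -(1 + θ) < -1 := by linarith
  rw [setLIntegral_congr Ioi_ae_eq_Ici.symm, ← ofReal_integral_eq_lintegral_ofReal
    (integrableOn_Ioi_rpow_of_lt hexp hδ), integral_Ioi_rpow_of_lt hexp hδ]
  · congr 1
    rw [show -(1 + θ) + 1 = -θ by ring, neg_div_neg_eq, div_eq_inv_mul]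
  · filter_upwards [ae_restrict_mem measurableSet_Ioi] with u hu
    exact Real.rpow_nonneg (hδ.trans hu).le _

theorem div_rpow_inv_le_of_le_mul_rpow {a L α d : ℝ} (ha : 0 ≤ a) (hL : 0 < L) (hα : 0 < α)
    (hd : 0 ≤ d) (h : a ≤ L * d ^ α) : (a / L) ^ α⁻¹ ≤ d := by
  rw [Real.rpow_inv_le_iff_of_pos (div_nonneg ha hL.le) hd hα, div_le_iff₀' hL]
  exact h

theorem crossing_integrand_le_indicator {x : ℝ → ℝ} {L α θ y s t : ℝ} (hL : 0 < L) (hα : 0 < α)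
    (hst : s < t) (hx : |x t - x s| ≤ L * |t - s| ^ α) :
    ENNReal.ofReal ((if x s < y ∧ y < x t then (1:ℝ) else 0) / (t - s) ^ (1 + θ))
      ≤ (Iic (t - ((x t - y) / L) ^ α⁻¹)).indicator
          (fun s ↦ ENNReal.ofReal ((t - s) ^ (-(1 + θ)))) s := by
  split_ifs with hcross
  · obtain ⟨hsy, hyt⟩ := hcross
    have hts : 0 < t - s := sub_pos.2 hst
    have hgap : ((x t - y) / L) ^ α⁻¹ ≤ t - s := by
      refine div_rpow_inv_le_of_le_mul_rpow (by linarith) hL hα hts.le ?_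
      calc x t - y ≤ |x t - x s| := (le_abs_self _).trans' (by linarith)
        _ ≤ L * (t - s) ^ α := by rwa [abs_of_pos hts] at hx
    rw [indicator_of_mem (by rw [mem_Iic]; linarith), one_div, Real.rpow_neg hts.le]
  · simp

theorem stmt5_general (T α θ L y : ℝ) (hα : α ∈ Set.Ioc (0:ℝ) 1)
    (hθ : θ ∈ Set.Ioo (0:ℝ) 1) (hL : 0 < L) (x : ℝ → ℝ)
    (hHolder : ∀ s t : ℝ, s ∈ Icc 0 T → t ∈ Icc 0 T → |x t - x s| ≤ L * |t - s| ^ α) :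
    ∀ t ∈ Icc (0:ℝ) T,
      ∫⁻ s in Ioo 0 t,
          ENNReal.ofReal ((if x s < y ∧ y < x t then (1:ℝ) else 0) / (t - s) ^ (1 + θ))
        ≤ ENNReal.ofReal (θ⁻¹ * L ^ (θ / α) * |x t - y| ^ (-(θ / α))) := by
  intro t ht
  by_cases hyt : y < x t
  swap
  · simp [hyt]
  have hA : 0 < x t - y := sub_pos.2 hyt
  set δ := ((x t - y) / L) ^ α⁻¹
  have hδ : 0 < δ := Real.rpow_pos_of_pos (div_pos hA hL) _
  calc _ ≤ ∫⁻ s in Ioo 0 t, (Iic (t - δ)).indicator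
          (fun s ↦ ENNReal.ofReal ((t - s) ^ (-(1 + θ)))) s :=
        setLIntegral_mono' measurableSet_Ioo fun s hs ↦ crossing_integrand_le_indicator hL hα.1
          hs.2 (hHolder s t ⟨hs.1.le, hs.2.le.trans ht.2⟩ ht)
    _ ≤ ∫⁻ s in Iic (t - δ), ENNReal.ofReal ((t - s) ^ (-(1 + θ))) :=
        (setLIntegral_le_lintegral _ _).trans_eq (lintegral_indicator measurableSet_Iic _)
    _ = ENNReal.ofReal (θ⁻¹ * δ ^ (-θ)) := by
        rw [setLIntegral_Iic_comp_const_sub (fun u ↦ ENNReal.ofReal (u ^ (-(1 + θ)))),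
          setLIntegral_Ici_rpow_neg_one_sub hθ.1 hδ]
    _ = _ := by
        rw [abs_of_pos hA, ← Real.rpow_mul (div_pos hA hL).le, Real.div_rpow hA.le hL.le,
          show α⁻¹ * -θ = -(θ / α) by ring, Real.rpow_neg hL.le, div_inv_eq_mul, mul_comm _ (L ^ _),
          mul_assoc]

/-- Level-crossing estimate: for an `α`-Hölder path `x` with constant `L`,
`∫₀ᵗ 1_{x_s < y < x_t}/(t-s)^{1+θ} ds ≤ θ⁻¹ L^{θ/α} |x_t - y|^{-θ/α}`. -/
theorem stmt5 (T α θ L y : ℝ) (hT : 0 < T) (hα : α ∈ Set.Ioc (0:ℝ) 1)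
    (hθ : θ ∈ Set.Ioo (0:ℝ) 1) (hL : 0 < L) (x : ℝ → ℝ)
    (hHolder : ∀ s t : ℝ, s ∈ Icc 0 T → t ∈ Icc 0 T → |x t - x s| ≤ L * |t - s| ^ α) :
    ∀ t ∈ Icc (0:ℝ) T,
      ∫⁻ s in Ioo 0 t,
          ENNReal.ofReal ((if x s < y ∧ y < x t then (1:ℝ) else 0) / (t - s) ^ (1 + θ))
        ≤ ENNReal.ofReal (θ⁻¹ * L ^ (θ / α) * |x t - y| ^ (-(θ / α))) :=
  stmt5_general T α θ L y hα hθ hL x hHolder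
end

section
/- Let f : ℝ → ℝ be right-continuous of finite total variation with variation measure μ_f, let x : [0,T] → ℝ be Hölder continuous of order α ∈ (0,1] with seminorm [x]_{α,∞}, and let θ ∈ (0,1). Then the Gagliardo seminorm of f∘x with exponent 1 satisfies [f ∘ x]_{θ,1} ≤ 4 θ^{-1} [x]_{α,∞}^{θ/α} ∫₀ᵀ ∫_{K_x} |x_t - y|^{-θ/α} μ_f(dy) dt, where K_x is the closure of the range of x. -/
/-!
For `s, t ∈ [0, T]` the jump `|f(x_t) - f(x_s)|` is at most `μ_f` of the interval between
`x_s` and `x_t`, which lies in `K_x` by the intermediate value theorem and, by Hölder continuity,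
in `(x_t, x_t + L|t-s|^α] ∪ (x_s, x_s + L|t-s|^α]`. This dominates the Gagliardo integrand by
`∫_{K_x} (H(t,s,y) + H(s,t,y)) μ_f(dy)` with
`H(t,s,y) = |t-s|^{-1-θ} 1{x_t < y ≤ x_t + L|t-s|^α}`, and by symmetry the two terms contribute
equally. Integrating `H` in `s` first (Tonelli), `y ≤ x_t + L|t-s|^α` forces
`|t-s| ≥ r := ((y - x_t)/L)^{1/α}`, and `∫_{|u| ≥ r} |u|^{-1-θ} du = 2 r^{-θ}/θ
= 2θ⁻¹ L^{θ/α} |x_t - y|^{-θ/α}`.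
-/

open MeasureTheory Set
open scoped ENNReal Interval

theorem lintegral_Ioi_rpow_of_lt {a c : ℝ} (ha : a < -1) (hc : 0 < c) :
    ∫⁻ x in Ioi c, ENNReal.ofReal (x ^ a) = ENNReal.ofReal (-c ^ (a + 1) / (a + 1)) := by
  rw [← ofReal_integral_eq_lintegral_ofReal (integrableOn_Ioi_rpow_of_lt ha hc)
    (ae_restrict_of_forall_mem measurableSet_Ioi fun x hx => Real.rpow_nonneg (hc.trans hx).le _),
    integral_Ioi_rpow_of_lt ha hc]

theorem lintegral_comp_abs_le {g : ℝ → ℝ≥0∞} (hg : Measurable g) :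
    ∫⁻ u, g |u| ≤ 2 * ∫⁻ u in Ici 0, g u := by
  have hpt : ∀ u : ℝ, g |u| ≤ (Ici 0).indicator g u + (Ici 0).indicator g (-u) := by
    intro u
    rcases le_total 0 u with hu | hu
    · rw [abs_of_nonneg hu, indicator_of_mem (mem_Ici.2 hu)]
      exact le_self_add
    · rw [abs_of_nonpos hu, indicator_of_mem (mem_Ici.2 (neg_nonneg.2 hu))]
      exact le_add_self
  have hgi : Measurable ((Ici (0 : ℝ)).indicator g) := hg.indicator measurableSet_Ici
  calc ∫⁻ u, g |u| ≤ ∫⁻ u, ((Ici 0).indicator g u + (Ici 0).indicator g (-u)) := lintegral_mono hpt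
    _ = 2 * ∫⁻ u in Ici 0, g u := by
      rw [lintegral_add_left hgi, lintegral_neg_eq_self, lintegral_indicator measurableSet_Ici,
        two_mul]

theorem lintegral_lintegral_add_swap {X : Type*} [MeasurableSpace X] (μ : Measure X) [SFinite μ]
    {F : X → X → ℝ≥0∞} (hF : Measurable (Function.uncurry F)) :
    ∫⁻ a, ∫⁻ b, (F a b + F b a) ∂μ ∂μ = 2 * ∫⁻ a, ∫⁻ b, F a b ∂μ ∂μ := by
  have hFa (a : X) : Measurable (F a) := hF.comp measurable_prodMk_left
  have hF' : Measurable fun a => ∫⁻ b, F a b ∂μ := hF.lintegral_prod_right'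
  have hswap : Measurable (Function.uncurry fun a b => F b a) := hF.comp measurable_swap
  rw [lintegral_congr fun a => lintegral_add_left (hFa a) _, lintegral_add_left hF',
    lintegral_lintegral_swap hswap.aemeasurable, two_mul]

theorem ofReal_abs_sub_le_measure_uIoc {f : ℝ → ℝ} {μ : Measure ℝ}
    (hf : ∀ a b, a ≤ b → |f b - f a| ≤ (μ (Ioc a b)).toReal) (a b : ℝ) :
    ENNReal.ofReal |f b - f a| ≤ μ (Ι a b) := by
  rcases le_total a b with h | h
  · rw [uIoc_of_le h]
    exact (ENNReal.ofReal_le_ofReal (hf a b h)).trans ENNReal.ofReal_toReal_le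
  · rw [uIoc_of_ge h, abs_sub_comm]
    exact (ENNReal.ofReal_le_ofReal (hf b a h)).trans ENNReal.ofReal_toReal_le

theorem uIoc_subset_Ioc_union_Ioc {a b c : ℝ} (h : |b - a| ≤ c) :
    Ι a b ⊆ Ioc a (a + c) ∪ Ioc b (b + c) := by
  intro y hy
  rcases le_total a b with hab | hab
  · rw [uIoc_of_le hab] at hy
    exact Or.inl ⟨hy.1, by linarith [hy.2, le_abs_self (b - a)]⟩
  · rw [uIoc_of_ge hab] at hy
    exact Or.inr ⟨hy.1, by linarith [hy.2, neg_abs_le (b - a)]⟩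

theorem uIoc_subset_image_Icc {x : ℝ → ℝ} {p q s t : ℝ} (hx : ContinuousOn x (Icc p q))
    (hs : s ∈ Icc p q) (ht : t ∈ Icc p q) : Ι (x s) (x t) ⊆ x '' Icc p q :=
  have hst : uIcc s t ⊆ Icc p q := uIcc_subset_Icc hs ht
  uIoc_subset_uIcc.trans <|
    (intermediate_value_uIcc (hx.mono hst)).trans (image_mono hst)

/-- `holderKernel L α θ (x t) (t - s) y` is the kernel `H(t, s, y)` above. -/
noncomputable def holderKernel (L α θ a u y : ℝ) : ℝ≥0∞ :=
  (Ioc a (a + L * |u| ^ α)).indicator (fun _ => ENNReal.ofReal (|u| ^ (-(1 + θ)))) y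

theorem measurable_holderKernel (L α θ : ℝ) :
    Measurable fun p : ℝ × ℝ × ℝ => holderKernel L α θ p.1 p.2.1 p.2.2 := by
  have hset : MeasurableSet
      ({p : ℝ × ℝ × ℝ | p.1 < p.2.2} ∩ {p | p.2.2 ≤ p.1 + L * |p.2.1| ^ α}) :=
    (measurableSet_lt (by fun_prop) (by fun_prop)).inter
      (measurableSet_le (by fun_prop) (by fun_prop))
  have heq : (fun p : ℝ × ℝ × ℝ => holderKernel L α θ p.1 p.2.1 p.2.2) =
      ({p : ℝ × ℝ × ℝ | p.1 < p.2.2} ∩ {p | p.2.2 ≤ p.1 + L * |p.2.1| ^ α}).indicator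
        fun p => ENNReal.ofReal (|p.2.1| ^ (-(1 + θ))) := by
    ext p
    simp only [holderKernel, indicator, mem_Ioc, mem_inter_iff, mem_ofPred_eq]
  rw [heq]
  exact Measurable.indicator (by fun_prop) hset

theorem holderKernel_le_indicator {L α θ a y : ℝ} (hα : 0 < α) (hL : 0 < L) (hay : a < y)
    (u : ℝ) :
    holderKernel L α θ a u y ≤
      (Ici (((y - a) / L) ^ α⁻¹)).indicator (fun v => ENNReal.ofReal (v ^ (-(1 + θ)))) |u| := by
  by_cases hy : y ∈ Ioc a (a + L * |u| ^ α)
  · have hyu : (y - a) / L ≤ |u| ^ α := by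
      rw [div_le_iff₀ hL]
      linarith [hy.2]
    have hr : ((y - a) / L) ^ α⁻¹ ≤ |u| := by
      calc ((y - a) / L) ^ α⁻¹ ≤ (|u| ^ α) ^ α⁻¹ :=
            Real.rpow_le_rpow (div_pos (sub_pos.2 hay) hL).le hyu (inv_nonneg.2 hα.le)
        _ = |u| := Real.rpow_rpow_inv (abs_nonneg u) hα.ne'
    rw [holderKernel, indicator_of_mem hy, indicator_of_mem (mem_Ici.2 hr)]
  · rw [holderKernel, indicator_of_notMem hy]
    exact zero_le

theorem lintegral_holderKernel_le {L α θ : ℝ} (hα : 0 < α) (hθ : 0 < θ) (hL : 0 < L)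
    (a y : ℝ) :
    ∫⁻ u, holderKernel L α θ a u y ≤
      ENNReal.ofReal (2 * θ⁻¹ * L ^ (θ / α)) * ENNReal.ofReal (|a - y| ^ (-(θ / α))) := by
  rcases le_or_gt y a with hya | hay
  · have hzero (u : ℝ) : holderKernel L α θ a u y = 0 :=
      indicator_of_notMem (fun hy => (not_lt.2 hya) hy.1) _
    simp [hzero]
  set r := ((y - a) / L) ^ α⁻¹
  have hr : 0 < r := Real.rpow_pos_of_pos (div_pos (sub_pos.2 hay) hL) _
  have hrθ : r ^ (-θ) = L ^ (θ / α) * |a - y| ^ (-(θ / α)) := by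
    rw [abs_sub_comm, abs_of_pos (sub_pos.2 hay), ← Real.rpow_mul (div_pos (sub_pos.2 hay) hL).le,
      Real.div_rpow (sub_pos.2 hay).le hL.le, inv_mul_eq_div, neg_div, Real.rpow_neg hL.le,
      div_eq_mul_inv, inv_inv, mul_comm]
  have hg : Measurable ((Ici r).indicator fun v : ℝ => ENNReal.ofReal (v ^ (-(1 + θ)))) :=
    (by fun_prop : Measurable fun v : ℝ => ENNReal.ofReal (v ^ (-(1 + θ)))).indicator
      measurableSet_Ici
  calc ∫⁻ u, holderKernel L α θ a u y
      ≤ ∫⁻ u, (Ici r).indicator (fun v => ENNReal.ofReal (v ^ (-(1 + θ)))) |u| :=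
        lintegral_mono (holderKernel_le_indicator hα hL hay)
    _ ≤ 2 * ∫⁻ v in Ici 0, (Ici r).indicator (fun v => ENNReal.ofReal (v ^ (-(1 + θ)))) v :=
        lintegral_comp_abs_le hg
    _ = 2 * ENNReal.ofReal (r ^ (-θ) / θ) := by
        rw [setLIntegral_indicator measurableSet_Ici, inter_eq_left.2 (Ici_subset_Ici.2 hr.le),
          setLIntegral_congr Ioi_ae_eq_Ici.symm, lintegral_Ioi_rpow_of_lt (by linarith) hr,
          show -(1 + θ) + 1 = -θ by ring, neg_div_neg_eq]
    _ = _ := by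
        rw [← ENNReal.ofReal_mul (by positivity), ← ENNReal.ofReal_ofNat 2,
          ← ENNReal.ofReal_mul zero_le_two, hrθ]
        congr 1
        ring

theorem ofReal_div_le_setLIntegral_holderKernel {f : ℝ → ℝ} {μ : Measure ℝ}
    (hf : ∀ a b, a ≤ b → |f b - f a| ≤ (μ (Ioc a b)).toReal) {L α θ a b s t : ℝ}
    {K : Set ℝ} (hab : |b - a| ≤ L * |t - s| ^ α) (hK : Ι a b ⊆ K) :
    ENNReal.ofReal (|f b - f a| / |t - s| ^ (1 + θ)) ≤
      ∫⁻ y in K, (holderKernel L α θ b (t - s) y + holderKernel L α θ a (s - t) y) ∂μ := by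
  set c := ENNReal.ofReal (|t - s| ^ (-(1 + θ)))
  set A₁ := Ioc a (a + L * |t - s| ^ α)
  set A₂ := Ioc b (b + L * |t - s| ^ α)
  have hA : MeasurableSet (A₁ ∪ A₂) := measurableSet_Ioc.union measurableSet_Ioc
  have hunion (y : ℝ) : (A₁ ∪ A₂).indicator (fun _ => c) y ≤
      holderKernel L α θ b (t - s) y + holderKernel L α θ a (s - t) y := by
    rw [holderKernel, holderKernel, abs_sub_comm s t, add_comm, ← indicator_union_add_inter_apply]
    exact le_self_add
  calc ENNReal.ofReal (|f b - f a| / |t - s| ^ (1 + θ))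
      = ENNReal.ofReal |f b - f a| * c := by
        rw [div_eq_mul_inv, ← Real.rpow_neg (abs_nonneg _), ENNReal.ofReal_mul (abs_nonneg _)]
    _ ≤ μ ((A₁ ∪ A₂) ∩ K) * c := by
        gcongr
        exact (ofReal_abs_sub_le_measure_uIoc hf a b).trans
          (measure_mono (subset_inter (uIoc_subset_Ioc_union_Ioc hab) hK))
    _ = ∫⁻ y in K, (A₁ ∪ A₂).indicator (fun _ => c) y ∂μ := by
        rw [lintegral_indicator_const hA, Measure.restrict_apply hA, mul_comm]
    _ ≤ _ := lintegral_mono hunion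

theorem setLIntegral_setLIntegral_holderKernel_le {L α θ : ℝ} (hα : 0 < α) (hθ : 0 < θ)
    (hL : 0 < L) (μ : Measure ℝ) [SFinite μ] (I K : Set ℝ) (a t : ℝ) :
    ∫⁻ s in I, ∫⁻ y in K, holderKernel L α θ a (t - s) y ∂μ ≤
      ENNReal.ofReal (2 * θ⁻¹ * L ^ (θ / α)) *
        ∫⁻ y in K, ENNReal.ofReal (|a - y| ^ (-(θ / α))) ∂μ := by
  have hmeas : Measurable fun p : ℝ × ℝ => holderKernel L α θ a (t - p.1) p.2 :=
    (measurable_holderKernel L α θ).comp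
      (by fun_prop : Measurable fun p : ℝ × ℝ => (a, t - p.1, p.2))
  calc ∫⁻ s in I, ∫⁻ y in K, holderKernel L α θ a (t - s) y ∂μ
      = ∫⁻ y in K, ∫⁻ s in I, holderKernel L α θ a (t - s) y ∂volume ∂μ :=
        lintegral_lintegral_swap hmeas.aemeasurable
    _ ≤ ∫⁻ y in K, ∫⁻ u, holderKernel L α θ a u y ∂volume ∂μ :=
        lintegral_mono fun y => (setLIntegral_le_lintegral _ _).trans_eq
          (lintegral_sub_left_eq_self (fun u => holderKernel L α θ a u y) t)
    _ ≤ ∫⁻ y in K, ENNReal.ofReal (2 * θ⁻¹ * L ^ (θ / α)) *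
          ENNReal.ofReal (|a - y| ^ (-(θ / α))) ∂μ :=
        lintegral_mono fun y => lintegral_holderKernel_le hα hθ hL a y
    _ = _ := lintegral_const_mul' _ _ ENNReal.ofReal_ne_top

theorem stmt15_general (T α θ L : ℝ) (hα : α ∈ Set.Ioc (0:ℝ) 1)
    (hθ : θ ∈ Set.Ioo (0:ℝ) 1) (hL : 0 < L)
    (f : ℝ → ℝ) (μf : Measure ℝ) [IsFiniteMeasure μf]
    (hfvar : ∀ a b : ℝ, a ≤ b → |f b - f a| ≤ (μf (Set.Ioc a b)).toReal)
    (x : ℝ → ℝ) (hx : Continuous x)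
    (hHolder : ∀ s t : ℝ, s ∈ Icc 0 T → t ∈ Icc 0 T → |x t - x s| ≤ L * |t - s| ^ α) :
    ∫⁻ t in Ioo 0 T, ∫⁻ s in Ioo 0 T,
        ENNReal.ofReal (|f (x t) - f (x s)| / |t - s| ^ (1 + θ)) ≤
      ENNReal.ofReal (4 * θ⁻¹ * L ^ (θ / α)) *
        ∫⁻ t in Ioo 0 T, ∫⁻ y in closure (x '' Icc 0 T),
          ENNReal.ofReal (|x t - y| ^ (-(θ / α))) ∂μf := by
  set K := closure (x '' Icc 0 T)
  set F : ℝ → ℝ → ℝ≥0∞ := fun t s => ∫⁻ y in K, holderKernel L α θ (x t) (t - s) y ∂μf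
  have hF : Measurable (Function.uncurry F) := by
    have hx' : Measurable fun q : (ℝ × ℝ) × ℝ => (x q.1.1, q.1.1 - q.1.2, q.2) := by fun_prop
    exact ((measurable_holderKernel L α θ).comp hx').lintegral_prod_right'
  have hpoint (t s : ℝ) (ht : t ∈ Ioo 0 T) (hs : s ∈ Ioo 0 T) :
      ENNReal.ofReal (|f (x t) - f (x s)| / |t - s| ^ (1 + θ)) ≤ F t s + F s t := by
    refine (ofReal_div_le_setLIntegral_holderKernel hfvar
      (hHolder s t (Ioo_subset_Icc_self hs) (Ioo_subset_Icc_self ht))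
      ((uIoc_subset_image_Icc hx.continuousOn (Ioo_subset_Icc_self hs)
        (Ioo_subset_Icc_self ht)).trans subset_closure)).trans_eq ?_
    exact lintegral_add_left (measurable_const.indicator measurableSet_Ioc) _
  calc _ ≤ ∫⁻ t in Ioo 0 T, ∫⁻ s in Ioo 0 T, (F t s + F s t) :=
        setLIntegral_mono' measurableSet_Ioo fun t ht =>
          setLIntegral_mono' measurableSet_Ioo fun s hs => hpoint t s ht hs
    _ = 2 * ∫⁻ t in Ioo 0 T, ∫⁻ s in Ioo 0 T, F t s := lintegral_lintegral_add_swap _ hF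
    _ ≤ 2 * ∫⁻ t in Ioo 0 T, ENNReal.ofReal (2 * θ⁻¹ * L ^ (θ / α)) *
          ∫⁻ y in K, ENNReal.ofReal (|x t - y| ^ (-(θ / α))) ∂μf := by
        gcongr with t
        exact setLIntegral_setLIntegral_holderKernel_le hα.1 hθ.1 hL μf _ K (x t) t
    _ = _ := by
        rw [lintegral_const_mul' _ _ ENNReal.ofReal_ne_top, ← mul_assoc, ← ENNReal.ofReal_ofNat 2,
          ← ENNReal.ofReal_mul zero_le_two]
        ring_nf

/-- Gagliardo seminorm bound (p = 1) for a composition `f ∘ x`, where `f` is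
right-continuous of finite variation with variation measure `μ_f` and `x` is
`α`-Hölder with constant `L`:
`[f ∘ x]_{θ,1} ≤ 4 θ⁻¹ L^{θ/α} ∫₀ᵀ ∫_{K_x} |x_t - y|^{-θ/α} μ_f(dy) dt`. -/
theorem stmt15 (T α θ L : ℝ) (hT : 0 < T) (hα : α ∈ Set.Ioc (0:ℝ) 1)
    (hθ : θ ∈ Set.Ioo (0:ℝ) 1) (hL : 0 < L)
    (f : ℝ → ℝ) (μf : Measure ℝ) [IsFiniteMeasure μf]
    (hfrc : ∀ a : ℝ, ContinuousWithinAt f (Set.Ici a) a)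
    (hfvar : ∀ a b : ℝ, a ≤ b → |f b - f a| ≤ (μf (Set.Ioc a b)).toReal)
    (x : ℝ → ℝ) (hx : Continuous x)
    (hHolder : ∀ s t : ℝ, s ∈ Icc 0 T → t ∈ Icc 0 T → |x t - x s| ≤ L * |t - s| ^ α) :
    ∫⁻ t in Ioo 0 T, ∫⁻ s in Ioo 0 T,
        ENNReal.ofReal (|f (x t) - f (x s)| / |t - s| ^ (1 + θ)) ≤
      ENNReal.ofReal (4 * θ⁻¹ * L ^ (θ / α)) *
        ∫⁻ t in Ioo 0 T, ∫⁻ y in closure (x '' Icc 0 T),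
          ENNReal.ofReal (|x t - y| ^ (-(θ / α))) ∂μf :=
  stmt15_general T α θ L hα hθ hL f μf hfvar x hx hHolder
end

section
/- Let x : [0,T] → ℝ satisfy |x_t - x_s| ≤ L(t-s)^α for s ≤ t (L > 0, α ∈ (0,1]), and fix y ∈ ℝ and θ ∈ (0,1). Then ∫₀ᵀ∫₀ᵗ 1_{(x_s ∧ x_t) < y < (x_s ∨ x_t)} / (t-s)^{1+θ} ds dt ≤ 2 θ^{-1} L^{θ/α} ∫₀ᵀ |x_t - y|^{-θ/α} dt. -/
open MeasureTheory Set

/-!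
If `y` lies strictly between `x s` and `x t` with `s ≤ t`, then
`|x t - y| ≤ |x t - x s| ≤ L (t - s) ^ α`, so `t - s ≥ δ := (|x t - y| / L) ^ (1 / α)`.
Hence the inner integral is at most `∫_δ^∞ u ^ (-(1 + θ)) du = δ ^ (-θ) / θ
= θ⁻¹ L ^ (θ / α) |x t - y| ^ (-(θ / α))`, and integrating in `t` gives the bound.
-/

lemma rpow_inv_le_sub_of_mem_uIoo {x : ℝ → ℝ} {α L y s t : ℝ} (hα : 0 < α) (hL : 0 < L)
    (hx : ∀ s t : ℝ, s ≤ t → |x t - x s| ≤ L * (t - s) ^ α) (hst : s ≤ t)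
    (hy : y ∈ uIoo (x s) (x t)) : (|x t - y| / L) ^ α⁻¹ ≤ t - s := by
  calc (|x t - y| / L) ^ α⁻¹ ≤ ((t - s) ^ α) ^ α⁻¹ := by
        gcongr
        rw [div_le_iff₀' hL]
        exact (abs_sub_right_of_mem_uIcc (uIoo_subset_uIcc_self hy)).trans (hx s t hst)
    _ = t - s := Real.rpow_rpow_inv (sub_nonneg.2 hst) hα.ne'

lemma lintegral_Iic_sub_rpow_neg_one_sub {θ δ : ℝ} (hθ : 0 < θ) (hδ : 0 < δ) (t : ℝ) :
    ∫⁻ s in Iic (t - δ), ENNReal.ofReal ((t - s) ^ (-(1 + θ))) =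
      ENNReal.ofReal (δ ^ (-θ) / θ) := by
  have hpre : (fun s : ℝ => t - s) ⁻¹' Ici δ = Iic (t - δ) := by
    ext s; simp [le_sub_comm]
  rw [← hpre, (Measure.measurePreserving_sub_left volume t).setLIntegral_comp_preimage_emb
      (Homeomorph.subLeft t).measurableEmbedding (fun u => ENNReal.ofReal (u ^ (-(1 + θ)))),
    Measure.restrict_congr_set Ioi_ae_eq_Ici.symm,
    ← ofReal_integral_eq_lintegral_ofReal (integrableOn_Ioi_rpow_of_lt (by linarith) hδ),
    integral_Ioi_rpow_of_lt (by linarith) hδ]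
  · congr 1
    rw [show -(1 + θ) + 1 = -θ by ring, neg_div_neg_eq]
  · filter_upwards [ae_restrict_mem measurableSet_Ioi] with u hu
    exact Real.rpow_nonneg (hδ.trans hu).le _

lemma lintegral_Iio_crossing_div_rpow_le {x : ℝ → ℝ} {α θ L : ℝ} (y t : ℝ)
    (hα : 0 < α) (hθ : 0 < θ) (hL : 0 < L) (hx : ∀ s t : ℝ, s ≤ t → |x t - x s| ≤ L * (t - s) ^ α) :
    ∫⁻ s in Iio t,
        ENNReal.ofReal ((if min (x s) (x t) < y ∧ y < max (x s) (x t) then (1:ℝ) else 0) /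
          (t - s) ^ (1 + θ)) ≤
      ENNReal.ofReal (θ⁻¹ * L ^ (θ / α) * |x t - y| ^ (-(θ / α))) := by
  by_cases hxt : x t = y
  -- here the right-hand side is `0`, since `0 ^ (-(θ / α)) = 0` for real powers
  · have hno : ∀ s, ¬(min (x s) (x t) < y ∧ y < max (x s) (x t)) := fun s h => by
      simp only [hxt, min_lt_iff, lt_max_iff, lt_irrefl, or_false] at h
      exact lt_asymm h.1 h.2
    simp only [hno, if_false, zero_div, ENNReal.ofReal_zero, lintegral_zero, zero_le]
  set δ := (|x t - y| / L) ^ α⁻¹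
  have hc : 0 < |x t - y| := abs_pos.2 (sub_ne_zero.2 hxt)
  have hδ : 0 < δ := by positivity
  have hpointwise : ∀ s ∈ Iio t,
      ENNReal.ofReal ((if min (x s) (x t) < y ∧ y < max (x s) (x t) then (1:ℝ) else 0) /
        (t - s) ^ (1 + θ)) ≤
      (Iic (t - δ)).indicator (fun s => ENNReal.ofReal ((t - s) ^ (-(1 + θ)))) s := by
    intro s hs
    have hst : s ≤ t := le_of_lt hs
    by_cases hy : min (x s) (x t) < y ∧ y < max (x s) (x t)
    · have hsδ : s ≤ t - δ := by
        linarith [rpow_inv_le_sub_of_mem_uIoo hα hL hx hst hy]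
      rw [indicator_of_mem (mem_Iic.2 hsδ), if_pos hy, one_div,
        Real.rpow_neg (sub_nonneg.2 hst)]
    · rw [if_neg hy, zero_div, ENNReal.ofReal_zero]
      exact zero_le
  calc _ ≤ ∫⁻ s in Iio t,
        (Iic (t - δ)).indicator (fun s => ENNReal.ofReal ((t - s) ^ (-(1 + θ)))) s :=
        setLIntegral_mono' measurableSet_Iio hpointwise
    _ ≤ ∫⁻ s, (Iic (t - δ)).indicator (fun s => ENNReal.ofReal ((t - s) ^ (-(1 + θ)))) s :=
        setLIntegral_le_lintegral _ _
    _ = ENNReal.ofReal (δ ^ (-θ) / θ) := by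
        rw [lintegral_indicator measurableSet_Iic, lintegral_Iic_sub_rpow_neg_one_sub hθ hδ]
    _ = ENNReal.ofReal (θ⁻¹ * L ^ (θ / α) * |x t - y| ^ (-(θ / α))) := by
        rw [← Real.rpow_mul (by positivity), show α⁻¹ * -θ = -(θ / α) by ring,
          Real.div_rpow hc.le hL.le, Real.rpow_neg hL.le, div_inv_eq_mul]
        ring_nf

theorem stmt16_general (T α θ L y : ℝ) (hα : α ∈ Set.Ioc (0:ℝ) 1)
    (hθ : θ ∈ Set.Ioo (0:ℝ) 1) (hL : 0 < L) (x : ℝ → ℝ)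
    (hHolder : ∀ s t : ℝ, s ≤ t → |x t - x s| ≤ L * (t - s) ^ α) :
    ∫⁻ t in Ioo 0 T, ∫⁻ s in Ioo 0 t,
        ENNReal.ofReal ((if min (x s) (x t) < y ∧ y < max (x s) (x t) then (1:ℝ) else 0) /
          (t - s) ^ (1 + θ)) ≤
      ENNReal.ofReal (2 * θ⁻¹ * L ^ (θ / α)) *
        ∫⁻ t in Ioo 0 T, ENNReal.ofReal (|x t - y| ^ (-(θ / α))) := by
  have hC : 0 ≤ θ⁻¹ * L ^ (θ / α) := by have := hθ.1; positivity
  calc _ ≤ ∫⁻ t in Ioo 0 T,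
        ENNReal.ofReal (θ⁻¹ * L ^ (θ / α)) * ENNReal.ofReal (|x t - y| ^ (-(θ / α))) :=
        lintegral_mono fun t => (lintegral_mono_set Ioo_subset_Iio_self).trans <|
          (lintegral_Iio_crossing_div_rpow_le y t hα.1 hθ.1 hL hHolder).trans_eq
            (ENNReal.ofReal_mul hC)
    _ = ENNReal.ofReal (θ⁻¹ * L ^ (θ / α)) *
          ∫⁻ t in Ioo 0 T, ENNReal.ofReal (|x t - y| ^ (-(θ / α))) :=
        lintegral_const_mul' _ _ ENNReal.ofReal_ne_top
    _ ≤ _ := by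
        gcongr ENNReal.ofReal ?_ * _
        rw [mul_assoc]
        linarith

/-- Level-crossing estimate over the square: for an `α`-Hölder path `x` with constant `L`,
`∫₀ᵀ∫₀ᵗ 1_{x_s ∧ x_t < y < x_s ∨ x_t}/(t-s)^{1+θ} ds dt ≤ 2θ⁻¹ L^{θ/α} ∫₀ᵀ |x_t - y|^{-θ/α} dt`. -/
theorem stmt16 (T α θ L y : ℝ) (hT : 0 < T) (hα : α ∈ Set.Ioc (0:ℝ) 1)
    (hθ : θ ∈ Set.Ioo (0:ℝ) 1) (hL : 0 < L) (x : ℝ → ℝ)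
    (hHolder : ∀ s t : ℝ, s ≤ t → |x t - x s| ≤ L * (t - s) ^ α) :
    ∫⁻ t in Ioo 0 T, ∫⁻ s in Ioo 0 t,
        ENNReal.ofReal ((if min (x s) (x t) < y ∧ y < max (x s) (x t) then (1:ℝ) else 0) /
          (t - s) ^ (1 + θ)) ≤
      ENNReal.ofReal (2 * θ⁻¹ * L ^ (θ / α)) *
        ∫⁻ t in Ioo 0 T, ENNReal.ofReal (|x t - y| ^ (-(θ / α))) :=
  stmt16_general T α θ L y hα hθ hL x hHolder
end
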